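/- arXiv:2010.11996 — 2 statements merged into one kernel-verified Lean document; each statement's English description precedes it below -/
import Mathlib

section
/- If $p$ and $q$ are odd nonnegative integers, then there exists a nonsingular real bilinear map $\mathbb{R}^{p+1} \times \mathbb{R}^{q+1} \to \mathbb{R}^{p+q}$. (Construction: identify $\mathbb{R}^{p+1} \cong \mathbb{C}^{(p+1)/2}$ and $\mathbb{R}^{q+1} \cong \mathbb{C}^{(q+1)/2}$ with complex polynomials of degrees less than $(p+1)/2$ and $(q+1)/2$, and multiply; the product has complex degree less than $(p+q)/2$, giving real dimension $p+q$.) -/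
/-!
Identify `ℝ^{2m}` with the complex polynomials of degree `< m`. Multiplying a polynomial of
degree `≤ a` by one of degree `≤ b` gives one of degree `≤ a + b`, and the product is bilinear
over `ℂ`, hence over `ℝ`. It is nonsingular because `ℂ[X]` has no zero divisors. For
`p = 2a + 1` and `q = 2b + 1` the three spaces have real dimensions `p + 1`, `q + 1` and `p + q`.
-/

open Polynomial Module

namespace LinearMap

variable {R M N P M' N' P' : Type*} [CommSemiring R]
  [AddCommMonoid M] [AddCommMonoid N] [AddCommMonoid P]
  [AddCommMonoid M'] [AddCommMonoid N'] [AddCommMonoid P']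
  [Module R M] [Module R N] [Module R P] [Module R M'] [Module R N'] [Module R P']

def IsNonsingular (B : M →ₗ[R] N →ₗ[R] P) : Prop :=
  ∀ x y, B x y = 0 → x = 0 ∨ y = 0

theorem IsNonsingular.compl₁₂_compr₂ {B : M →ₗ[R] N →ₗ[R] P} (hB : B.IsNonsingular)
    {f : M' →ₗ[R] M} {g : N' →ₗ[R] N} {h : P →ₗ[R] P'} (hf : Function.Injective f)
    (hg : Function.Injective g) (hh : Function.Injective h) :
    ((B.compl₁₂ f g).compr₂ h).IsNonsingular := by
  intro x y hxy
  rw [compr₂_apply, compl₁₂_apply, ← map_zero h] at hxy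
  exact (hB _ _ (hh hxy)).imp (fun hx => hf (hx.trans (map_zero f).symm))
    (fun hy => hg (hy.trans (map_zero g).symm))

theorem IsNonsingular.restrictScalars₁₂ {S : Type*} [CommSemiring S] [Module S M] [Module S N]
    [Module S P] [SMulCommClass S S P] [SMul S R] [IsScalarTower S R M] [IsScalarTower S R N]
    [IsScalarTower S R P] {B : M →ₗ[R] N →ₗ[R] P} (hB : B.IsNonsingular) :
    (B.restrictScalars₁₂ S S).IsNonsingular :=
  hB

end LinearMap

namespace Polynomial

theorem mul_mem_degreeLT_add_one {R : Type*} [Semiring R] {m n : ℕ} {p q : R[X]}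
    (hp : p ∈ R[X]_(m + 1)) (hq : q ∈ R[X]_(n + 1)) : p * q ∈ R[X]_(m + n + 1) := by
  rw [degreeLT_succ_eq_degreeLE, mem_degreeLE] at hp hq ⊢
  exact (degree_mul_le p q).trans (by push_cast; exact add_le_add hp hq)

namespace degreeLT

variable (R : Type*) [CommSemiring R] (m n : ℕ)

noncomputable def mul : R[X]_(m + 1) →ₗ[R] R[X]_(n + 1) →ₗ[R] R[X]_(m + n + 1) :=
  LinearMap.mk₂ R (fun p q => ⟨p * q, mul_mem_degreeLT_add_one p.2 q.2⟩)
    (fun _ _ _ => Subtype.ext (add_mul _ _ _)) (fun _ _ _ => Subtype.ext (smul_mul_assoc _ _ _))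
    (fun _ _ _ => Subtype.ext (mul_add _ _ _)) (fun _ _ _ => Subtype.ext (mul_smul_comm _ _ _))

theorem isNonsingular_mul {R : Type*} [CommRing R] [NoZeroDivisors R] (m n : ℕ) :
    (mul R m n).IsNonsingular := by
  intro p q hpq
  have : (p : R[X]) * q = 0 := congrArg Subtype.val hpq
  exact (mul_eq_zero.mp this).imp Subtype.ext Subtype.ext

end degreeLT

theorem finrank_real_degreeLT_complex (n : ℕ) : finrank ℝ (ℂ[X]_n) = 2 * n := by
  rw [← finrank_mul_finrank ℝ ℂ, Complex.finrank_real_complex,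
    finrank_eq_card_basis (degreeLT.basis ℂ n), Fintype.card_fin]

end Polynomial

/-- For odd `p` and `q` there exists a nonsingular real bilinear map
`ℝ^{p+1} × ℝ^{q+1} → ℝ^{p+q}`. -/
theorem stmt_3 (p q : ℕ) (hp : Odd p) (hq : Odd q) :
    ∃ B : (Fin (p + 1) → ℝ) → (Fin (q + 1) → ℝ) → (Fin (p + q) → ℝ),
      (∀ y, IsLinearMap ℝ fun x => B x y) ∧
      (∀ x, IsLinearMap ℝ fun y => B x y) ∧
      (∀ x y, B x y = 0 → x = 0 ∨ y = 0) := by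
  obtain ⟨a, rfl⟩ := hp
  obtain ⟨b, rfl⟩ := hq
  have real_equiv (n k : ℕ) (hk : k = 2 * n) : ℂ[X]_n ≃ₗ[ℝ] (Fin k → ℝ) :=
    LinearEquiv.ofFinrankEq _ _ (by simp [finrank_real_degreeLT_complex, hk])
  let eX := real_equiv (a + 1) (2 * a + 1 + 1) (by ring)
  let eY := real_equiv (b + 1) (2 * b + 1 + 1) (by ring)
  let eZ := real_equiv (a + b + 1) (2 * a + 1 + (2 * b + 1)) (by ring)
  let B := (((degreeLT.mul ℂ a b).restrictScalars₁₂ ℝ ℝ).compl₁₂ eX.symm.toLinearMap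
    eY.symm.toLinearMap).compr₂ eZ.toLinearMap
  have hB : B.IsNonsingular := (degreeLT.isNonsingular_mul a b).restrictScalars₁₂.compl₁₂_compr₂
    eX.symm.injective eY.symm.injective eZ.injective
  exact ⟨fun x y => B x y, fun y => (B.flip y).isLinear, fun x => (B x).isLinear, hB⟩
end

section
/- Let $\Sigma$ be a simplicial complex on ground set $[n]$ with $\chi(\mathrm{KG}(\Sigma)) = c$, where $\mathrm{KG}(\Sigma)$ is the Kneser graph of nonfaces of $\Sigma$. Then $\Sigma$ can be written as an intersection $\Sigma = \Sigma_1 \cap \cdots \cap \Sigma_c$ of simplicial complexes on $[n]$ such that for each $j$, any two nonfaces of $\Sigma_j$ intersect. -/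
/-! Colour the nonfaces of `K` properly and let `Σⱼ` consist of the sets containing no
nonface of colour `j`. Each `Σⱼ` is a complex; a set lies in every `Σⱼ` iff it contains no
nonface of `K` at all, i.e. iff it is a face of `K`; and two disjoint nonfaces of `Σⱼ` would
contain two disjoint nonfaces of `K` of the same colour `j`. -/

section ColorLowerSet

variable {α ι : Type*} [PartialOrder α]

def colorLowerSet (K : Set α) (col : α → ι) (j : ι) : LowerSet α :=
  (upperClosure {τ | τ ∉ K ∧ col τ = j}).compl

theorem mem_colorLowerSet {K : Set α} {col : α → ι} {j : ι} {σ : α} :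
    σ ∈ colorLowerSet K col j ↔ ∀ τ ≤ σ, τ ∉ K → col τ ≠ j := by
  simp only [colorLowerSet, UpperSet.mem_compl_iff, mem_upperClosure, Set.mem_ofPred_eq,
    not_exists, not_and, and_imp]
  exact ⟨fun h τ hτσ hτ hc => h τ hτ hc hτσ, fun h τ hτ hc hτσ => h τ hτσ hτ hc⟩

theorem iInter_colorLowerSet {K : Set α} (hK : IsLowerSet K) (col : α → ι) :
    ⋂ j, (colorLowerSet K col j : Set α) = K := by
  ext σ
  simp only [Set.mem_iInter, SetLike.mem_coe, mem_colorLowerSet]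
  refine ⟨fun h => by_contra fun hσ => h (col σ) σ le_rfl hσ rfl,
    fun hσ _ τ hτσ hτ => absurd (hK hτσ hσ) hτ⟩

theorem not_disjoint_of_notMem_colorLowerSet [OrderBot α] {K : Set α} {col : α → ι}
    (hcol : ∀ σ τ, σ ∉ K → τ ∉ K → Disjoint σ τ → col σ ≠ col τ) {j : ι} {σ τ : α}
    (hσ : σ ∉ colorLowerSet K col j) (hτ : τ ∉ colorLowerSet K col j) : ¬Disjoint σ τ := by
  simp only [mem_colorLowerSet, not_forall, not_not] at hσ hτ
  obtain ⟨a, haσ, haK, rfl⟩ := hσ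
  obtain ⟨b, hbτ, hbK, hba⟩ := hτ
  exact fun hd => hcol a b haK hbK (hd.mono haσ hbτ) hba.symm

end ColorLowerSet

/-- If the Kneser graph of nonfaces of a simplicial complex `K` on `[n]` has a proper
coloring with `c` colors, then `K` is the intersection of `c` simplicial complexes on `[n]`,
each of which has pairwise intersecting nonfaces. -/
theorem stmt_7 (n c : ℕ) (K : Set (Finset (Fin n)))
    (hdc : ∀ σ ∈ K, ∀ τ ⊆ σ, τ ∈ K)
    (col : Finset (Fin n) → Fin c)
    (hcol : ∀ σ τ : Finset (Fin n), σ ∉ K → τ ∉ K → Disjoint σ τ → col σ ≠ col τ) :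
    ∃ S : Fin c → Set (Finset (Fin n)),
      (∀ j, ∀ σ ∈ S j, ∀ τ ⊆ σ, τ ∈ S j) ∧
      K = ⋂ j, S j ∧
      (∀ j, ∀ σ τ : Finset (Fin n), σ ∉ S j → τ ∉ S j → ¬ Disjoint σ τ) := by
  have hK : IsLowerSet K := fun σ τ hτσ hσ => hdc σ hσ τ hτσ
  exact ⟨fun j => colorLowerSet K col j,
    fun j _ hσ _ hτσ => (colorLowerSet K col j).lower hτσ hσ,
    (iInter_colorLowerSet hK col).symm,
    fun _ _ _ => not_disjoint_of_notMem_colorLowerSet hcol⟩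
end
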